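/- Let g be a steepest-descent circuit direction at x₀ for the linear program min{cᵀx : Ax = b, Bx ≤ d}. Then cᵀg / ‖Bg‖₁ ≤ cᵀu / ‖Bu‖₁ for every strictly feasible direction u at x₀ with Bu ≠ 0. -/

import Mathlib

/-!
Write `ρ` for the steepest-descent ratio. A feasible direction `u` at `x₀` is one with `A u = 0`
and `(B u)ᵢ ≤ 0` on the rows tight at `x₀`. If `u` is not a circuit, some `y ≠ 0` in `ker A` has
`supp (B y) ⊊ supp (B u)`. Moving from `u` along `±y` until a coordinate of `B u` vanishes, and
then once more along the result, splits `u = p + q` with `B p`, `B q` sign-compatible with `B u`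
and of strictly smaller support. Both parts are again feasible directions, and both `‖B ·‖₁` and
`cᵀ·` are additive on the split, so `ρ ‖B u‖₁ ≤ cᵀu` follows by well-founded induction on
`supp (B u)` from the circuit case, where it is the minimality of `ρ`. Pointedness guarantees
`B y ≠ 0` and `B g ≠ 0` for circuits `g`.
-/

open Matrix Function Filter Topology

section SignCompatible

variable {ι : Type*} {v w x y : ι → ℝ}

def SignCompatible (x y : ι → ℝ) : Prop := ∀ i, 0 ≤ x i * y i

lemma SignCompatible.nonpos (h : SignCompatible x w) (hs : support x ⊆ support w) {i : ι}
    (hw : w i ≤ 0) : x i ≤ 0 := by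
  rcases hw.lt_or_eq with hw | hw
  · exact nonpos_of_mul_nonneg_left (h i) hw
  · exact (notMem_support.1 fun hx => hs hx hw).le

lemma SignCompatible.of_support_subset (hx : SignCompatible x w) (hy : SignCompatible y w)
    (hs : support x ⊆ support w) : SignCompatible x y := by
  intro i
  by_cases hw : w i = 0
  · simp [notMem_support.1 fun hx => hs hx hw]
  · have := mul_nonneg (hx i) (hy i)
    have := mul_self_pos.2 hw
    nlinarith

lemma sum_abs_add_of_signCompatible [Fintype ι] (h : SignCompatible x y) :
    ∑ i, |x i + y i| = ∑ i, |x i| + ∑ i, |y i| := by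
  rw [← Finset.sum_add_distrib]
  exact Finset.sum_congr rfl fun i _ => abs_add_eq_add_abs_iff _ _ |>.2 (mul_nonneg_iff.1 (h i))

lemma sum_abs_pos_of_ne_zero [Fintype ι] (hx : x ≠ 0) : 0 < ∑ i, |x i| := by
  obtain ⟨i, hi⟩ := Function.ne_iff.1 hx
  exact Finset.sum_pos' (fun i _ => abs_nonneg _) ⟨i, Finset.mem_univ _, abs_pos.2 hi⟩

/-- The largest `t` keeping `w - t • v` sign-compatible with `w` is `min (w i / v i)` over the
coordinates where `v` and `w` have the same strict sign; it kills the minimizing coordinate. -/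
lemma exists_pos_signCompatible_sub_smul [Fintype ι] (hvw : support v ⊆ support w)
    (hpos : ∃ i, 0 < v i * w i) :
    ∃ t : ℝ, 0 < t ∧ SignCompatible (w - t • v) w ∧ support (w - t • v) ⊂ support w := by
  classical
  set S := Finset.univ.filter fun i => 0 < v i * w i
  have hS : S.Nonempty := by simpa [S, Finset.Nonempty] using hpos
  have hmem : ∀ {i}, i ∈ S ↔ 0 < v i * w i := by simp [S]
  set t := S.inf' hS fun i => w i / v i
  have hv : ∀ {i}, 0 < v i * w i → v i ≠ 0 := fun h => left_ne_zero_of_mul h.ne'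
  have ht : 0 < t := (Finset.lt_inf'_iff hS).2 fun i hi =>
    div_pos_iff.2 <| mul_pos_iff.1 (by rw [mul_comm]; exact hmem.1 hi)
  refine ⟨t, ht, fun i => ?_, ?_⟩
  · simp only [Pi.sub_apply, Pi.smul_apply, smul_eq_mul]
    by_cases hi : 0 < v i * w i
    · have hle : t ≤ w i / v i := Finset.inf'_le _ (hmem.2 hi)
      have hcancel : w i / v i * (v i * w i) = w i * w i := by field_simp [hv hi]
      nlinarith [mul_le_mul_of_nonneg_right hle hi.le]
    · nlinarith [mul_self_nonneg (w i)]
  · obtain ⟨j, hj, hjt⟩ := Finset.exists_mem_eq_inf' hS fun i => w i / v i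
    have hj := hmem.1 hj
    have hsub : support (w - t • v) ⊆ support w := fun i hi hwi =>
      hi (by simp [hwi, notMem_support.1 fun hv => hvw hv hwi])
    refine (Set.ssubset_iff_of_subset hsub).2 ⟨j, right_ne_zero_of_mul hj.ne', ?_⟩
    simp [t, hjt, div_mul_cancel₀ _ (hv hj)]

lemma exists_signCompatible_split [Fintype ι] (V : Submodule ℝ (ι → ℝ)) (hw : w ∈ V)
    (hv : v ∈ V) (hv0 : v ≠ 0) (hvw : support v ⊂ support w) :
    ∃ p ∈ V, SignCompatible p w ∧ SignCompatible (w - p) w ∧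
      support p ⊂ support w ∧ support (w - p) ⊂ support w := by
  obtain ⟨v', hv'V, hv's, hv'pos⟩ :
      ∃ v' ∈ V, support v' = support v ∧ ∃ i, 0 < v' i * w i := by
    obtain ⟨i, hi⟩ := Function.ne_iff.1 hv0
    rcases (mul_ne_zero hi (hvw.1 hi)).lt_or_gt with h | h
    · exact ⟨-v, V.neg_mem hv, support_neg v, i, by simpa using h⟩
    · exact ⟨v, hv, rfl, i, h⟩
  obtain ⟨t, -, hzw, hzs⟩ := exists_pos_signCompatible_sub_smul (hv's ▸ hvw.1) hv'pos
  set z := w - t • v'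
  obtain ⟨j, hjw, hjv⟩ := Set.exists_of_ssubset hvw
  have hzj : 0 < z j * w j := by
    have : v' j = 0 := notMem_support.1 (hv's ▸ hjv)
    simpa [z, this] using mul_self_pos.2 hjw
  obtain ⟨s, hs, hc, hss⟩ := exists_pos_signCompatible_sub_smul hzs.1 ⟨j, hzj⟩
  refine ⟨s • z, V.smul_mem s (V.sub_mem hw (V.smul_mem t hv'V)), fun i => ?_, hc, ?_, hss⟩
  · simpa [mul_assoc] using mul_nonneg hs.le (hzw i)
  · rwa [support_const_smul_of_ne_zero s z hs.ne']

end SignCompatible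

section Circuit

variable {m p n : Type*} [Fintype n] (A : Matrix m n ℝ) (B : Matrix p n ℝ)

def IsCircuit (g : n → ℝ) : Prop :=
  g ≠ 0 ∧ A *ᵥ g = 0 ∧
    ¬ ∃ y : n → ℝ, y ≠ 0 ∧ A *ᵥ y = 0 ∧ support (B *ᵥ y) ⊂ support (B *ᵥ g)

lemma eq_zero_of_rank_fromRows_eq_card (hrank : (fromRows A B).rank = Fintype.card n)
    {y : n → ℝ} (hA : A *ᵥ y = 0) (hB : B *ᵥ y = 0) : y = 0 := by
  have hker : LinearMap.ker (fromRows A B).mulVecLin = ⊥ := by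
    have := LinearMap.finrank_range_add_finrank_ker (fromRows A B).mulVecLin
    rw [Module.finrank_fintype_fun_eq_card, ← Matrix.rank, hrank] at this
    exact Submodule.finrank_eq_zero.1 (by omega)
  have hy : y ∈ LinearMap.ker (fromRows A B).mulVecLin := by
    simp [fromRows_mulVec, hA, hB]
  simpa [hker] using hy

theorem mul_sum_abs_le_dotProduct_of_isCircuit [Fintype p]
    (hker : ∀ y, A *ᵥ y = 0 → B *ᵥ y = 0 → y = 0) (T : Set p) (c : n → ℝ) (ρ : ℝ)
    (hcirc : ∀ g, IsCircuit A B g → (∀ i ∈ T, (B *ᵥ g) i ≤ 0) →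
      ρ * ∑ i, |(B *ᵥ g) i| ≤ c ⬝ᵥ g)
    (u : n → ℝ) (hAu : A *ᵥ u = 0) (hTu : ∀ i ∈ T, (B *ᵥ u) i ≤ 0) :
    ρ * ∑ i, |(B *ᵥ u) i| ≤ c ⬝ᵥ u := by
  induction hsu : support (B *ᵥ u) using WellFoundedLT.induction generalizing u with
  | ind s ih =>
  subst hsu
  by_cases hu : IsCircuit A B u
  · exact hcirc u hu hTu
  rcases eq_or_ne u 0 with rfl | hu0
  · simp
  obtain ⟨y, hy0, hAy, hys⟩ := not_not.1 fun h => hu ⟨hu0, hAu, h⟩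
  obtain ⟨-, ⟨u₁, hAu₁, rfl⟩, hc₁, hc₂, hs₁, hs₂⟩ := exists_signCompatible_split
    ((LinearMap.ker A.mulVecLin).map B.mulVecLin) ⟨u, hAu, rfl⟩ ⟨y, hAy, rfl⟩
    (fun h => hy0 (hker y hAy h)) hys
  simp only [SetLike.mem_coe, LinearMap.mem_ker, mulVecLin_apply] at hAu₁ hc₁ hc₂ hs₁ hs₂
  have hB₂ : B *ᵥ (u - u₁) = B *ᵥ u - B *ᵥ u₁ := mulVec_sub B u u₁
  have ih₁ := ih _ hs₁ u₁ hAu₁ (fun i hi => hc₁.nonpos hs₁.1 (hTu i hi)) rfl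
  have ih₂ := ih _ (hB₂ ▸ hs₂) (u - u₁) (by rw [mulVec_sub, hAu, hAu₁, sub_zero])
    (fun i hi => hB₂ ▸ hc₂.nonpos hs₂.1 (hTu i hi)) rfl
  calc ρ * ∑ i, |(B *ᵥ u) i|
      = ρ * ∑ i, |(B *ᵥ u₁) i| + ρ * ∑ i, |(B *ᵥ (u - u₁)) i| := by
        rw [← mul_add, hB₂, ← sum_abs_add_of_signCompatible (hc₁.of_support_subset hc₂ hs₁.1)]
        simp only [Pi.sub_apply, add_sub_cancel]
    _ ≤ c ⬝ᵥ u₁ + c ⬝ᵥ (u - u₁) := add_le_add ih₁ ih₂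
    _ = c ⬝ᵥ u := by rw [dotProduct_sub, add_sub_cancel]

def IsFeasibleDirection (b : m → ℝ) (d : p → ℝ) (x₀ u : n → ℝ) : Prop :=
  ∃ α : ℝ, 0 < α ∧ A *ᵥ (x₀ + α • u) = b ∧ ∀ i, (B *ᵥ (x₀ + α • u)) i ≤ d i

variable {A B} in
lemma isFeasibleDirection_iff [Finite p] {b : m → ℝ} {d : p → ℝ} {x₀ : n → ℝ}
    (hx₀A : A *ᵥ x₀ = b) (hx₀B : ∀ i, (B *ᵥ x₀) i ≤ d i) {u : n → ℝ} :
    IsFeasibleDirection A B b d x₀ u ↔ A *ᵥ u = 0 ∧ ∀ i, (B *ᵥ x₀) i = d i → (B *ᵥ u) i ≤ 0 := by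
  have hB : ∀ α i, (B *ᵥ (x₀ + α • u)) i = (B *ᵥ x₀) i + α * (B *ᵥ u) i := by
    simp [mulVec_add, mulVec_smul]
  constructor
  · rintro ⟨α, hα, hA, hBle⟩
    refine ⟨?_, fun i hi => ?_⟩
    · rw [mulVec_add, mulVec_smul, hx₀A, add_eq_left, smul_eq_zero] at hA
      exact hA.resolve_left hα.ne'
    · have := hBle i
      rw [hB, hi, add_le_iff_nonpos_right] at this
      exact nonpos_of_mul_nonpos_right this hα
  · rintro ⟨hAu, hT⟩
    have hev : ∀ i, ∀ᶠ α in 𝓝[>] (0 : ℝ), (B *ᵥ x₀) i + α * (B *ᵥ u) i ≤ d i := by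
      intro i
      rcases (hx₀B i).eq_or_lt with hi | hi
      · filter_upwards [self_mem_nhdsWithin] with α hα
        linarith [mul_nonpos_of_nonneg_of_nonpos (le_of_lt hα) (hT i hi)]
      · have : Tendsto (fun α => (B *ᵥ x₀) i + α * (B *ᵥ u) i) (𝓝 0) (𝓝 ((B *ᵥ x₀) i)) := by
          exact Continuous.tendsto' (by fun_prop) 0 _ (by simp)
        exact nhdsWithin_le_nhds (this.eventually (eventually_le_nhds hi))
    obtain ⟨α, hBα, hα⟩ := ((eventually_all.2 hev).and self_mem_nhdsWithin).exists
    refine ⟨α, hα, ?_, fun i => (hB α i).trans_le (hBα i)⟩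
    rw [mulVec_add, mulVec_smul, hAu, smul_zero, add_zero, hx₀A]

end Circuit

theorem steepest_descent_bounds_all_feasible_general {n mA mB : ℕ}
    (A : Matrix (Fin mA) (Fin n) ℝ) (B : Matrix (Fin mB) (Fin n) ℝ)
    (hpointed : (Matrix.fromRows A B).rank = n)
    (b : Fin mA → ℝ) (d : Fin mB → ℝ) (c : Fin n → ℝ)
    (x₀ : Fin n → ℝ) (hx₀A : A.mulVec x₀ = b) (hx₀B : ∀ i, B.mulVec x₀ i ≤ d i)
    (g : Fin n → ℝ)
    -- g minimizes cᵀg/‖Bg‖₁ over all strictly feasible circuits at x₀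
    (hsteepest : ∀ g' : Fin n → ℝ, g' ≠ 0 → A.mulVec g' = 0 →
      (¬ ∃ y : Fin n → ℝ, y ≠ 0 ∧ A.mulVec y = 0 ∧
        {j | B.mulVec y j ≠ 0} ⊂ {j | B.mulVec g' j ≠ 0}) →
      (∃ α : ℝ, 0 < α ∧ A.mulVec (x₀ + α • g') = b ∧
        ∀ i, B.mulVec (x₀ + α • g') i ≤ d i) →
      c ⬝ᵥ g / (∑ i, |B.mulVec g i|) ≤ c ⬝ᵥ g' / (∑ i, |B.mulVec g' i|)) :
    ∀ u : Fin n → ℝ, B.mulVec u ≠ 0 →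
      (∃ α : ℝ, 0 < α ∧ A.mulVec (x₀ + α • u) = b ∧
        ∀ i, B.mulVec (x₀ + α • u) i ≤ d i) →
      c ⬝ᵥ g / (∑ i, |B.mulVec g i|) ≤ c ⬝ᵥ u / (∑ i, |B.mulVec u i|) := by
  intro u hBu hu
  have hker : ∀ y, A *ᵥ y = 0 → B *ᵥ y = 0 → y = 0 := fun _ =>
    eq_zero_of_rank_fromRows_eq_card A B (by rwa [Fintype.card_fin])
  obtain ⟨hAu, hTu⟩ := (isFeasibleDirection_iff hx₀A hx₀B).1 hu
  rw [le_div_iff₀ (sum_abs_pos_of_ne_zero hBu)]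
  refine mul_sum_abs_le_dotProduct_of_isCircuit A B hker {i | (B *ᵥ x₀) i = d i} c _
    (fun g' hg' hTg' => ?_) u hAu hTu
  obtain ⟨hg'0, hAg', hg'min⟩ := hg'
  have hBg' : B *ᵥ g' ≠ 0 := fun h => hg'0 (hker g' hAg' h)
  exact (le_div_iff₀ (sum_abs_pos_of_ne_zero hBg')).1 <| hsteepest g' hg'0 hAg' hg'min <|
    (isFeasibleDirection_iff hx₀A hx₀B).2 ⟨hAg', hTg'⟩

/-- A steepest-descent circuit direction `g` at `x₀` (a strictly feasible
circuit minimizing `cᵀg / ‖Bg‖₁` over all strictly feasible circuits at `x₀`) satisfies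
`cᵀg / ‖Bg‖₁ ≤ cᵀu / ‖Bu‖₁` for every strictly feasible direction `u` at `x₀` with
`Bu ≠ 0`. -/
theorem steepest_descent_bounds_all_feasible {n mA mB : ℕ}
    (A : Matrix (Fin mA) (Fin n) ℝ) (B : Matrix (Fin mB) (Fin n) ℝ)
    (hpointed : (Matrix.fromRows A B).rank = n)
    (b : Fin mA → ℝ) (d : Fin mB → ℝ) (c : Fin n → ℝ)
    (x₀ : Fin n → ℝ) (hx₀A : A.mulVec x₀ = b) (hx₀B : ∀ i, B.mulVec x₀ i ≤ d i)
    (g : Fin n → ℝ)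
    -- g is a circuit of P
    (hg0 : g ≠ 0) (hgA : A.mulVec g = 0)
    (hgmin : ¬ ∃ y : Fin n → ℝ, y ≠ 0 ∧ A.mulVec y = 0 ∧
      {j | B.mulVec y j ≠ 0} ⊂ {j | B.mulVec g j ≠ 0})
    -- g is strictly feasible at x₀
    (hgfeas : ∃ α : ℝ, 0 < α ∧ A.mulVec (x₀ + α • g) = b ∧
      ∀ i, B.mulVec (x₀ + α • g) i ≤ d i)
    -- g minimizes cᵀg/‖Bg‖₁ over all strictly feasible circuits at x₀
    (hsteepest : ∀ g' : Fin n → ℝ, g' ≠ 0 → A.mulVec g' = 0 →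
      (¬ ∃ y : Fin n → ℝ, y ≠ 0 ∧ A.mulVec y = 0 ∧
        {j | B.mulVec y j ≠ 0} ⊂ {j | B.mulVec g' j ≠ 0}) →
      (∃ α : ℝ, 0 < α ∧ A.mulVec (x₀ + α • g') = b ∧
        ∀ i, B.mulVec (x₀ + α • g') i ≤ d i) →
      c ⬝ᵥ g / (∑ i, |B.mulVec g i|) ≤ c ⬝ᵥ g' / (∑ i, |B.mulVec g' i|)) :
    ∀ u : Fin n → ℝ, B.mulVec u ≠ 0 →
      (∃ α : ℝ, 0 < α ∧ A.mulVec (x₀ + α • u) = b ∧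
        ∀ i, B.mulVec (x₀ + α • u) i ≤ d i) →
      c ⬝ᵥ g / (∑ i, |B.mulVec g i|) ≤ c ⬝ᵥ u / (∑ i, |B.mulVec u i|) :=
  steepest_descent_bounds_all_feasible_general A B hpointed b d c x₀ hx₀A hx₀B g hsteepest
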